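/- arXiv:2110.01679 — 3 statements merged into one kernel-verified Lean document; each statement's English description precedes it below -/
import Mathlib

section
/- Let b11, b12, b22, κ, s be real numbers with s ≠ 0, set b := b11·b22 − b12² and assume b ≠ 0. Let R = diag(1, −1), D = (2/b)·[[s·κ·b22, κ·b12], [−b12, −b11/s]], H the 4×4 block matrix [[R, 0], [D, R]], ρ = diag(κ, 1), and Ω the 4×4 block matrix [[0, ρ], [−ρ, 0]]. Then Hᵀ·Ω·H − Ω is the 4×4 matrix whose upper-left 2×2 block equals (2·(1 − κ²)/b)·[[0, −b12], [b12, 0]] and all of whose other entries are zero. Equivalently, R·ρ·D − Dᵀ·ρ·R = (2·(1 − κ²)/b)·[[0, −b12], [b12, 0]]. -/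
open Matrix

theorem billiard_symplectic_obstruction
    (b11 b12 b22 κ s : ℝ) (hs : s ≠ 0)
    (b : ℝ) (hb : b = b11 * b22 - b12 ^ 2) (hbne : b ≠ 0)
    (R : Matrix (Fin 2) (Fin 2) ℝ) (hR : R = !![1, 0; 0, -1])
    (D : Matrix (Fin 2) (Fin 2) ℝ)
    (hD : D = (2 / b) • !![s * κ * b22, κ * b12; -b12, -(b11 / s)])
    (H : Matrix (Fin 4) (Fin 4) ℝ)
    (hH : H = Matrix.reindex finSumFinEquiv finSumFinEquiv (Matrix.fromBlocks R 0 D R))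
    (ρ : Matrix (Fin 2) (Fin 2) ℝ) (hρ : ρ = !![κ, 0; 0, 1])
    (Ω : Matrix (Fin 4) (Fin 4) ℝ)
    (hΩ : Ω = Matrix.reindex finSumFinEquiv finSumFinEquiv (Matrix.fromBlocks 0 ρ (-ρ) 0)) :
    Hᵀ * Ω * H - Ω =
      Matrix.reindex finSumFinEquiv finSumFinEquiv
        (Matrix.fromBlocks ((2 * (1 - κ ^ 2) / b) • !![0, -b12; b12, 0]) (0 : Matrix (Fin 2) (Fin 2) ℝ) (0 : Matrix (Fin 2) (Fin 2) ℝ) (0 : Matrix (Fin 2) (Fin 2) ℝ)) ∧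
    R * ρ * D - Dᵀ * ρ * R = (2 * (1 - κ ^ 2) / b) • !![0, -b12; b12, 0] := by
  have key : R * ρ * D - Dᵀ * ρ * R = (2 * (1 - κ ^ 2) / b) • !![0, -b12; b12, 0] := by
    subst hR hρ hD
    ext i j
    fin_cases i <;> fin_cases j <;>
      simp [Matrix.mul_apply, Fin.sum_univ_succ] <;> field_simp <;> ring
  refine ⟨?_, key⟩
  have hRρR : R * ρ * R = ρ := by
    subst hR hρ
    ext i j
    fin_cases i <;> fin_cases j <;> simp [Matrix.mul_apply, Fin.sum_univ_succ]
  have hblock : (Matrix.fromBlocks R 0 D R)ᵀ * Matrix.fromBlocks 0 ρ (-ρ) 0 *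
      Matrix.fromBlocks R 0 D R - Matrix.fromBlocks 0 ρ (-ρ) 0 =
      Matrix.fromBlocks ((2 * (1 - κ ^ 2) / b) • !![0, -b12; b12, 0]) 0 0 0 := by
    have hRt : Rᵀ = R := by subst hR; ext i j; fin_cases i <;> fin_cases j <;> simp
    rw [Matrix.fromBlocks_transpose, hRt, Matrix.fromBlocks_multiply,
      Matrix.fromBlocks_multiply, sub_eq_add_neg, Matrix.fromBlocks_neg,
      Matrix.fromBlocks_add]
    simp only [Matrix.mul_zero, Matrix.zero_mul, Matrix.mul_neg, Matrix.neg_mul,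
      zero_add, add_zero, neg_zero, Matrix.transpose_zero, hRρR, add_neg_cancel,
      neg_add_cancel, neg_add_eq_sub, key]
  rw [hH, hΩ]
  simp only [Matrix.reindex_apply, Matrix.transpose_submatrix, Matrix.submatrix_mul_equiv]
  ext i j
  have := congrFun (congrFun hblock (finSumFinEquiv.symm i)) (finSumFinEquiv.symm j)
  simpa [Matrix.sub_apply, Matrix.submatrix_apply] using this
end

section
/- Let b11, b12, b22, κ, s be real numbers with s ≠ 0 and b11 ≠ 0, set b := b11·b22 − b12² and assume b ≠ 0. Let R = diag(1, −1), D = (2/b)·[[s·κ·b22, κ·b12], [−b12, −b11/s]], and H the 4×4 block matrix [[R, 0], [D, R]]. Let j = (1/2)·[[0, 1], [−1, 0]] and let Ω× be the 4×4 block-diagonal matrix [[j, 0], [0, j]]. Then the lower-left 2×2 block of Hᵀ·Ω×·H equals R·j·D = (1/b)·[[−b12, −b11/s], [s·κ·b22, κ·b12]], which is a nonzero matrix; consequently Hᵀ·Ω×·H ≠ Ω×. -/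
open Matrix

theorem billiard_map_not_symplectic_cross_form
    (b11 b12 b22 κ s : ℝ) (hs : s ≠ 0) (hb11 : b11 ≠ 0)
    (b : ℝ) (hb : b = b11 * b22 - b12 ^ 2) (hbne : b ≠ 0)
    (R : Matrix (Fin 2) (Fin 2) ℝ) (hR : R = !![1, 0; 0, -1])
    (D : Matrix (Fin 2) (Fin 2) ℝ)
    (hD : D = (2 / b) • !![s * κ * b22, κ * b12; -b12, -(b11 / s)])
    (H : Matrix (Fin 4) (Fin 4) ℝ)
    (hH : H = Matrix.reindex finSumFinEquiv finSumFinEquiv (Matrix.fromBlocks R 0 D R))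
    (j : Matrix (Fin 2) (Fin 2) ℝ) (hj : j = (1 / 2 : ℝ) • !![0, 1; -1, 0])
    (Ωx : Matrix (Fin 4) (Fin 4) ℝ)
    (hΩx : Ωx = Matrix.reindex finSumFinEquiv finSumFinEquiv
      (Matrix.fromBlocks j 0 0 j)) :
    Matrix.toBlocks₂₁
        ((Matrix.reindex (finSumFinEquiv : Fin 2 ⊕ Fin 2 ≃ Fin 4) (finSumFinEquiv : Fin 2 ⊕ Fin 2 ≃ Fin 4)).symm (Hᵀ * Ωx * H)) = R * j * D ∧
      R * j * D = (1 / b) • !![-b12, -(b11 / s); s * κ * b22, κ * b12] ∧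
      R * j * D ≠ 0 ∧
      Hᵀ * Ωx * H ≠ Ωx := by
  have key : Hᵀ * Ωx * H = Matrix.reindex finSumFinEquiv finSumFinEquiv
      ((Matrix.fromBlocks R 0 D R)ᵀ * (Matrix.fromBlocks j 0 0 j) * (Matrix.fromBlocks R 0 D R)) := by
    rw [hH, hΩx]
    simp [Matrix.reindex_apply, Matrix.transpose_submatrix, Matrix.submatrix_mul_equiv]
  have hblock : (Matrix.fromBlocks R 0 D R)ᵀ * (Matrix.fromBlocks j 0 0 j) *
      (Matrix.fromBlocks R 0 D R)
      = Matrix.fromBlocks (Rᵀ * (j * R) + Dᵀ * (j * D)) (Dᵀ * (j * R)) (Rᵀ * (j * D)) (Rᵀ * (j * R)) := by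
    rw [Matrix.fromBlocks_transpose, Matrix.fromBlocks_multiply, Matrix.fromBlocks_multiply]
    simp [Matrix.mul_assoc]
  have h1 : Matrix.toBlocks₂₁
        ((Matrix.reindex (finSumFinEquiv : Fin 2 ⊕ Fin 2 ≃ Fin 4) (finSumFinEquiv : Fin 2 ⊕ Fin 2 ≃ Fin 4)).symm (Hᵀ * Ωx * H)) = R * j * D := by
    rw [key]
    simp only [Equiv.symm_apply_apply, hblock, Matrix.toBlocks_fromBlocks₂₁]
    have hRT : Rᵀ = R := by
      rw [hR]; ext a c; fin_cases a <;> fin_cases c <;> simp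
    rw [hRT, Matrix.mul_assoc]
  have h2 : R * j * D = (1 / b) • !![-b12, -(b11 / s); s * κ * b22, κ * b12] := by
    subst hR hj hD
    ext a c
    fin_cases a <;> fin_cases c <;>
      simp [Matrix.mul_apply, Fin.sum_univ_two] <;> field_simp <;> ring
  have h3 : R * j * D ≠ 0 := by
    intro h0
    have := congrFun (congrFun (h2 ▸ h0) 0) 1
    simp at this
    rcases this with h | h | h
    · exact hbne (by simpa using inv_eq_zero.mp (by simpa [one_div] using h))
    · exact hb11 h
    · exact hs h
  refine ⟨h1, h2, h3, ?_⟩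
  intro heq
  apply h3
  rw [← h1, heq, hΩx]
  simp only [Equiv.symm_apply_apply, Matrix.toBlocks_fromBlocks₂₁]
end

section
/- Define H : ℝ → ℝ by H(a) = artanh(2a) − artanh(a·√(4a² + 3)) + artanh(a·√(2a² + 1)) − artanh(a), where artanh is the inverse hyperbolic tangent. Then H(0) = 0 and H is differentiable at 0 with derivative H′(0) = 2 − √3; in particular H′(0) ≠ 0. -/
/-! Each of the four terms is `artanh (g a)` with `g 0 = 0`, so by the chain rule its derivative
at `0` is `g' 0`; these are `2`, `√3`, `1`, `1`, because `(a * h a)' = h 0` at `0`. -/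

/-- The inverse hyperbolic tangent. -/
noncomputable def artanh (x : ℝ) : ℝ := (1 / 2) * Real.log ((1 + x) / (1 - x))

theorem artanh_zero : artanh 0 = 0 := by simp [artanh]

theorem hasDerivAt_artanh {x : ℝ} (hx₁ : x ≠ 1) (hx₂ : x ≠ -1) :
    HasDerivAt artanh (1 / (1 - x ^ 2)) x := by
  have hsub : 1 - x ≠ 0 := sub_ne_zero.mpr hx₁.symm
  have hadd : 1 + x ≠ 0 := fun h => hx₂ (by linarith)
  have hquot : HasDerivAt (fun y : ℝ => (1 + y) / (1 - y))
      ((1 * (1 - x) - (1 + x) * (-1)) / (1 - x) ^ 2) x :=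
    ((hasDerivAt_id x).const_add 1).div ((hasDerivAt_id x).const_sub 1) hsub
  refine ((hquot.log (div_ne_zero hadd hsub)).const_mul (1 / 2 : ℝ)).congr_deriv ?_
  rw [show 1 - x ^ 2 = (1 - x) * (1 + x) by ring]
  field_simp
  ring

theorem HasDerivAt.artanh {f : ℝ → ℝ} {f' x : ℝ} (hf : HasDerivAt f f' x)
    (hx₁ : f x ≠ 1) (hx₂ : f x ≠ -1) :
    HasDerivAt (fun y => artanh (f y)) (f' / (1 - f x ^ 2)) x :=
  ((hasDerivAt_artanh hx₁ hx₂).comp x hf).congr_deriv (by ring)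

theorem hasDerivAt_id_mul_of_continuousAt_zero {𝕜 : Type*} [NontriviallyNormedField 𝕜]
    {g : 𝕜 → 𝕜} (hg : ContinuousAt g 0) :
    HasDerivAt (fun a => a * g a) (g 0) 0 := by
  rw [hasDerivAt_iff_tendsto_slope]
  refine (hg.tendsto.mono_left nhdsWithin_le_nhds).congr' ?_
  filter_upwards [self_mem_nhdsWithin] with a (ha : a ≠ 0)
  simp [slope_def_field, ha]

theorem holonomy_deriv_at_zero :
    (fun a : ℝ => artanh (2 * a) - artanh (a * Real.sqrt (4 * a ^ 2 + 3)) +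
        artanh (a * Real.sqrt (2 * a ^ 2 + 1)) - artanh a) 0 = 0 ∧
      HasDerivAt
        (fun a : ℝ => artanh (2 * a) - artanh (a * Real.sqrt (4 * a ^ 2 + 3)) +
          artanh (a * Real.sqrt (2 * a ^ 2 + 1)) - artanh a)
        (2 - Real.sqrt 3) 0 ∧
      (2 - Real.sqrt 3 : ℝ) ≠ 0 := by
  refine ⟨by simp [artanh_zero], ?_, ?_⟩
  · have h₁ := (((hasDerivAt_id (0 : ℝ)).const_mul 2).artanh (by simp) (by simp))
    have h₂ := (hasDerivAt_id_mul_of_continuousAt_zero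
      (g := fun a : ℝ => Real.sqrt (4 * a ^ 2 + 3)) (by fun_prop)).artanh (by simp) (by simp)
    have h₃ := (hasDerivAt_id_mul_of_continuousAt_zero
      (g := fun a : ℝ => Real.sqrt (2 * a ^ 2 + 1)) (by fun_prop)).artanh (by simp) (by simp)
    have h₄ := (hasDerivAt_id (0 : ℝ)).artanh (by simp) (by simp)
    exact (((h₁.sub h₂).add h₃).sub h₄).congr_deriv (by norm_num)
  · have : Real.sqrt 3 < 2 := (Real.sqrt_lt' two_pos).mpr (by norm_num)
    linarith
end
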